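/- Let $M_c(s) = f_0 + g^T s + \tfrac12 s^T H s + \tfrac{\beta}{6}\|s\|_W^3 + \tfrac{\sigma_c}{4}\|s\|_W^4$ with $\sigma_c > 0$. Suppose $s_c \in \mathbb{R}^n$ satisfies: (i) $\big(H + \tfrac{\beta}{2}\|s_c\|_W W + \sigma_c \|s_c\|_W^2 W\big) s_c = -g$; (ii) $H + \tfrac{\beta}{2}\|s_c\|_W W + \sigma_c \|s_c\|_W^2 W \succeq 0$; and (iii) $\beta \ge -3\sigma_c \|s_c\|_W$. Then $s_c$ is a global minimizer of $M_c$ over $\mathbb{R}^n$. -/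

import Mathlib

open Matrix

noncomputable def normW {n : ℕ} (W : Matrix (Fin n) (Fin n) ℝ) (v : Fin n → ℝ) : ℝ :=
  Real.sqrt (v ⬝ᵥ W.mulVec v)

noncomputable def Mc {n : ℕ} (f0 : ℝ) (g : Fin n → ℝ) (H W : Matrix (Fin n) (Fin n) ℝ)
    (β σc : ℝ) (s : Fin n → ℝ) : ℝ :=
  f0 + g ⬝ᵥ s + (1 / 2) * (s ⬝ᵥ H.mulVec s) + (β / 6) * (normW W s) ^ 3
    + (σc / 4) * (normW W s) ^ 4

/-! Put `a = ‖s_c‖_W` and `c = β a / 2 + σ_c a²`. Since `sᵀ W s = ‖s‖_W²`, the model splits as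
`M_c(s) = f₀ + (gᵀ s + ½ sᵀ (H + c W) s) + ψ(‖s‖_W)` with `ψ(t) = -c t² / 2 + β t³ / 6 + σ_c t⁴ / 4`.
By (i) and (ii), `s_c` minimises the convex quadratic `gᵀ s + ½ sᵀ (H + c W) s`, while
`ψ(t) - ψ(a) = (t - a)² (3 σ_c (t + a)² + β (2 t + a)) / 12`, and (iii) makes the second factor
at least `3 σ_c t² ≥ 0`. So `s_c` minimises both parts at once. -/

variable {ι R : Type*} [Fintype ι]

lemma Matrix.IsSymm.dotProduct_mulVec_comm [CommSemiring R] {A : Matrix ι ι R} (hA : A.IsSymm)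
    (u v : ι → R) : u ⬝ᵥ A *ᵥ v = v ⬝ᵥ A *ᵥ u := by
  rw [dotProduct_mulVec, ← vecMul_transpose, hA.eq, dotProduct_comm]

lemma Matrix.IsSymm.two_mul_dotProduct_add_dotProduct_mulVec_eq [CommRing R] {B : Matrix ι ι R}
    (hB : B.IsSymm) {g x : ι → R} (hx : B *ᵥ x = -g) (y : ι → R) :
    2 * (g ⬝ᵥ y) + y ⬝ᵥ B *ᵥ y
      = 2 * (g ⬝ᵥ x) + x ⬝ᵥ B *ᵥ x + (y - x) ⬝ᵥ B *ᵥ (y - x) := by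
  obtain rfl : g = -(B *ᵥ x) := by rw [hx, neg_neg]
  simp only [mulVec_sub, sub_dotProduct, dotProduct_sub, neg_dotProduct,
    dotProduct_comm (B *ᵥ x), hB.dotProduct_mulVec_comm y x]
  ring

lemma Matrix.PosSemidef.dotProduct_add_half_dotProduct_mulVec_le {B : Matrix ι ι ℝ}
    (hB : B.PosSemidef) {g x : ι → ℝ} (hx : B *ᵥ x = -g) (y : ι → ℝ) :
    g ⬝ᵥ x + 1 / 2 * (x ⬝ᵥ B *ᵥ x) ≤ g ⬝ᵥ y + 1 / 2 * (y ⬝ᵥ B *ᵥ y) := by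
  have hcompl := (isHermitian_iff_isSymm.mp hB.1).two_mul_dotProduct_add_dotProduct_mulVec_eq hx y
  have hnonneg : 0 ≤ (y - x) ⬝ᵥ B *ᵥ (y - x) := by
    simpa using hB.dotProduct_mulVec_nonneg (y - x)
  linarith

lemma normW_nonneg {n : ℕ} (W : Matrix (Fin n) (Fin n) ℝ) (v : Fin n → ℝ) : 0 ≤ normW W v :=
  Real.sqrt_nonneg _

lemma normW_sq {n : ℕ} {W : Matrix (Fin n) (Fin n) ℝ} (hW : W.PosSemidef) (v : Fin n → ℝ) :
    normW W v ^ 2 = v ⬝ᵥ W *ᵥ v :=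
  Real.sq_sqrt (by simpa using hW.dotProduct_mulVec_nonneg v)

noncomputable def radialTerm (β σ c t : ℝ) : ℝ :=
  -(c / 2) * t ^ 2 + β / 6 * t ^ 3 + σ / 4 * t ^ 4

lemma Mc_eq_add_radialTerm {n : ℕ} (f0 : ℝ) (g : Fin n → ℝ) (H : Matrix (Fin n) (Fin n) ℝ)
    {W : Matrix (Fin n) (Fin n) ℝ} (hW : W.PosSemidef) (β σc c : ℝ) (s : Fin n → ℝ) :
    Mc f0 g H W β σc s
      = f0 + (g ⬝ᵥ s + 1 / 2 * (s ⬝ᵥ (H + c • W) *ᵥ s)) + radialTerm β σc c (normW W s) := by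
  rw [Mc, radialTerm, add_mulVec, smul_mulVec, dotProduct_add, dotProduct_smul, smul_eq_mul,
    ← normW_sq hW]
  ring

lemma radialTerm_le {β σ a t : ℝ} (hσ : 0 ≤ σ) (ha : 0 ≤ a) (ht : 0 ≤ t)
    (hβ : -3 * σ * a ≤ β) :
    radialTerm β σ (β / 2 * a + σ * a ^ 2) a ≤ radialTerm β σ (β / 2 * a + σ * a ^ 2) t := by
  have hdiff : radialTerm β σ (β / 2 * a + σ * a ^ 2) t - radialTerm β σ (β / 2 * a + σ * a ^ 2) a
      = (t - a) ^ 2 * (3 * σ * (t + a) ^ 2 + β * (2 * t + a)) / 12 := by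
    simp only [radialTerm]
    ring
  have hfactor : 0 ≤ 3 * σ * (t + a) ^ 2 + β * (2 * t + a) := by
    nlinarith [mul_le_mul_of_nonneg_right hβ (by positivity : (0 : ℝ) ≤ 2 * t + a),
      mul_nonneg hσ (sq_nonneg t)]
  have hdiff_nonneg : 0 ≤ (t - a) ^ 2 * (3 * σ * (t + a) ^ 2 + β * (2 * t + a)) / 12 := by positivity
  linarith

theorem stmt_2_general {n : ℕ} (f0 : ℝ) (g : Fin n → ℝ) (H W : Matrix (Fin n) (Fin n) ℝ)
    (β σc : ℝ) (hW : W.PosDef) (hσ : 0 < σc)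
    (sc : Fin n → ℝ)
    (h1 : (H + ((β / 2) * normW W sc) • W + (σc * (normW W sc) ^ 2) • W).mulVec sc = -g)
    (h2 : (H + ((β / 2) * normW W sc) • W + (σc * (normW W sc) ^ 2) • W).PosSemidef)
    (h3 : -3 * σc * normW W sc ≤ β) :
    ∀ s : Fin n → ℝ, Mc f0 g H W β σc sc ≤ Mc f0 g H W β σc s := by
  intro s
  set c := β / 2 * normW W sc + σc * normW W sc ^ 2
  have hB : H + (β / 2 * normW W sc) • W + (σc * normW W sc ^ 2) • W = H + c • W := by
    rw [add_assoc, ← add_smul]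
  rw [hB] at h1 h2
  rw [Mc_eq_add_radialTerm f0 g H hW.posSemidef β σc c sc,
    Mc_eq_add_radialTerm f0 g H hW.posSemidef β σc c s]
  gcongr f0 + ?_ + ?_
  · exact h2.dotProduct_add_half_dotProduct_mulVec_le h1 s
  · exact radialTerm_le hσ.le (normW_nonneg W sc) (normW_nonneg W s) h3

theorem stmt_2 {n : ℕ} (f0 : ℝ) (g : Fin n → ℝ) (H W : Matrix (Fin n) (Fin n) ℝ)
    (β σc : ℝ) (hH : H.IsSymm) (hW : W.PosDef) (hσ : 0 < σc)
    (sc : Fin n → ℝ)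
    (h1 : (H + ((β / 2) * normW W sc) • W + (σc * (normW W sc) ^ 2) • W).mulVec sc = -g)
    (h2 : (H + ((β / 2) * normW W sc) • W + (σc * (normW W sc) ^ 2) • W).PosSemidef)
    (h3 : -3 * σc * normW W sc ≤ β) :
    ∀ s : Fin n → ℝ, Mc f0 g H W β σc sc ≤ Mc f0 g H W β σc s :=
  stmt_2_general f0 g H W β σc hW hσ sc h1 h2 h3
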